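/- arXiv:2206.05155 — 4 statements merged into one kernel-verified Lean document; each statement's English description precedes it below -/
import Mathlib

section
/- Diffusion matrix lower bound. Given constants 0 < m₀ < M₀ and E₀, H₀ > 0, there exist δ̄ ∈ (0,1) and c₀, R₀ > 0, depending only on m₀, M₀, E₀, H₀, with the following property: for every function k : (0,∞) → (0,∞) that is nondecreasing and such that r ↦ k(r)/r is nonincreasing, every measurable f : ℝ³ → [0,∞) with m₀ ≤ ∫_{ℝ³} f(v) dv ≤ M₀, ∫_{ℝ³} f(v)|v|² dv ≤ E₀, f ln f integrable and ∫_{ℝ³} f(v) ln f(v) dv ≤ H₀, every δ ∈ (0, δ̄], every v ∈ ℝ³ and every unit vector e ∈ ℝ³, one has ∫_{{z : |z| ≥ δ}} (k(|z|)/|z|) (1 − ((e·z)/|z|)²) f(v+z) dz ≥ c₀ k(|v| + R₀)/(1+|v|)³. -/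
/-!
Chebyshev's inequality with the second moment leaves mass at least `3m₀/4` in a ball `B` of
radius `R₀`. The pointwise bound `-x log x ≤ x |w|² + e^{-|w|²-1}` turns the entropy bound into
a bound on the mass where `f ≥ L`, so that every set of volume at most `m₀/(8L)` carries mass at
most `m₀/4`. The part of `B` within distance `ρ` of the line `v + ℝe` is such a set once
`64 L R₀ ρ² ≤ m₀`, so mass at least `m₀/2` lies in `B` at distance more than `ρ ≥ δ` from that
line. For such `v + z` one has `|z| ≤ |v| + R₀` and `1 - (e·z/|z|)² ≥ ρ²/|z|²`, and since
`k(r)/r` is nonincreasing the integrand is at least `k(|v|+R₀) ρ² (|v|+R₀)⁻³ f(v+z)`.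
-/

open MeasureTheory Set Real Module
open scoped ENNReal RealInnerProductSpace

theorem Real.neg_mul_log_le_mul_add_exp {x : ℝ} (hx : 0 ≤ x) (a : ℝ) :
    -(x * log x) ≤ x * a + exp (-a - 1) := by
  rcases hx.eq_or_lt with rfl | hx
  · simp [(exp_pos _).le]
  · have h := add_one_le_exp (-a - 1 - log x)
    rw [exp_sub, exp_log hx, le_div_iff₀ hx] at h
    linarith

theorem integrable_exp_neg_sq_norm_sub_one {V : Type*} [NormedAddCommGroup V]
    [InnerProductSpace ℝ V] [FiniteDimensional ℝ V] [MeasurableSpace V] [BorelSpace V] :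
    Integrable (fun w : V => exp (-‖w‖ ^ 2 - 1)) := by
  have h := GaussianFourier.integrable_cexp_neg_mul_sq_norm_add (V := V) (b := 1) (by simp) 0 0
  convert h.norm.const_mul (exp (-1)) using 2 with w
  simp [Complex.norm_exp, ← Complex.ofReal_pow, ← exp_add]
  ring_nf

section Density

variable {α : Type*} [MeasurableSpace α] {μ : Measure α} {f : α → ℝ}

theorem withDensity_ofReal_apply_eq_ofReal_setIntegral (hf0 : ∀ x, 0 ≤ f x)
    (hfi : Integrable f μ) {s : Set α} (hs : MeasurableSet s) :
    μ.withDensity (fun x => ENNReal.ofReal (f x)) s = ENNReal.ofReal (∫ x in s, f x ∂μ) := by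
  rw [withDensity_apply _ hs, ofReal_integral_eq_lintegral_ofReal hfi.integrableOn (.of_forall hf0)]

theorem withDensity_le_mul_add_withDensity_lt [SFinite μ] (F : α → ℝ≥0∞) (c : ℝ≥0∞)
    (P : Set α) : μ.withDensity F P ≤ c * μ P + μ.withDensity F {x | c < F x} := by
  calc μ.withDensity F P ≤ μ.withDensity F (P ∩ {x | F x ≤ c}) + μ.withDensity F {x | c < F x} :=
        (measure_mono fun x hx => (le_or_gt (F x) c).imp (⟨hx, ·⟩) id).trans (measure_union_le _ _)
    _ ≤ c * μ P + μ.withDensity F {x | c < F x} := by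
        gcongr
        rw [withDensity_apply' _, ← setLIntegral_const]
        exact (setLIntegral_mono measurable_const fun x hx => hx.2).trans
          (lintegral_mono_set inter_subset_left)

theorem log_mul_setIntegral_superlevel_le {L : ℝ} (hL : 0 < L) (hfm : Measurable f)
    (hf0 : ∀ x, 0 ≤ f x) (hfi : Integrable f μ)
    (hfl : Integrable (fun x => f x * log (f x)) μ) :
    log L * ∫ x in {x | L ≤ f x}, f x ∂μ ≤ ∫ x in {x | L ≤ f x}, f x * log (f x) ∂μ := by
  rw [← integral_const_mul]
  refine setIntegral_mono_on (hfi.integrableOn.const_mul _) hfl.integrableOn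
    (measurableSet_le measurable_const hfm) fun x hx => ?_
  rw [mul_comm]
  exact mul_le_mul_of_nonneg_left (log_le_log hL hx) (hf0 x)

end Density

section Moments

variable {V : Type*} [NormedAddCommGroup V] [MeasurableSpace V] {μ : Measure V} {f : V → ℝ}

theorem integral_sub_div_sq_le_setIntegral_ball [OpensMeasurableSpace V] (hf0 : ∀ w, 0 ≤ f w)
    (hfi : Integrable f μ) (hfm : Integrable (fun w => f w * ‖w‖ ^ 2) μ) {R : ℝ} (hR : 0 < R) :
    ∫ w, f w ∂μ - (∫ w, f w * ‖w‖ ^ 2 ∂μ) / R ^ 2 ≤ ∫ w in Metric.ball 0 R, f w ∂μ := by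
  have htail : R ^ 2 * ∫ w in (Metric.ball 0 R)ᶜ, f w ∂μ ≤ ∫ w, f w * ‖w‖ ^ 2 ∂μ := by
    rw [← integral_const_mul]
    refine (setIntegral_mono_on (hfi.integrableOn.const_mul _) hfm.integrableOn
      measurableSet_ball.compl fun w hw => ?_).trans
      (setIntegral_le_integral hfm (.of_forall fun w => mul_nonneg (hf0 w) (sq_nonneg _)))
    have hRw : R ≤ ‖w‖ := by simpa using hw
    rw [mul_comm]
    gcongr
    exact hf0 w
  rw [← integral_add_compl measurableSet_ball hfi, sub_le_iff_le_add, add_le_add_iff_left,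
    le_div_iff₀ (by positivity), mul_comm]
  exact htail

theorem setIntegral_superlevel_le_div_log {L : ℝ} (hL : 1 < L) (hfm : Measurable f)
    (hf0 : ∀ w, 0 ≤ f w) (hfi : Integrable f μ) (hfl : Integrable (fun w => f w * log (f w)) μ)
    (hf2 : Integrable (fun w => f w * ‖w‖ ^ 2) μ)
    (hg : Integrable (fun w => exp (-‖w‖ ^ 2 - 1)) μ) :
    ∫ w in {w | L ≤ f w}, f w ∂μ ≤ (∫ w, f w * log (f w) ∂μ + ∫ w, f w * ‖w‖ ^ 2 ∂μ +
      ∫ w, exp (-‖w‖ ^ 2 - 1) ∂μ) / log L := by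
  have hs : MeasurableSet {w | L ≤ f w} := measurableSet_le measurable_const hfm
  have hsuper := log_mul_setIntegral_superlevel_le (by linarith) hfm hf0 hfi hfl (μ := μ)
  have hsub : ∫ w in {w | L ≤ f w}ᶜ, -(f w * log (f w)) ∂μ ≤
      ∫ w in {w | L ≤ f w}ᶜ, (f w * ‖w‖ ^ 2 + exp (-‖w‖ ^ 2 - 1)) ∂μ :=
    setIntegral_mono_on hfl.neg.integrableOn (hf2.add hg).integrableOn hs.compl
      fun w _ => neg_mul_log_le_mul_add_exp (hf0 w) _
  have hall : ∫ w in {w | L ≤ f w}ᶜ, (f w * ‖w‖ ^ 2 + exp (-‖w‖ ^ 2 - 1)) ∂μ ≤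
      ∫ w, (f w * ‖w‖ ^ 2 + exp (-‖w‖ ^ 2 - 1)) ∂μ :=
    setIntegral_le_integral (hf2.add hg)
      (.of_forall fun w => add_nonneg (mul_nonneg (hf0 w) (sq_nonneg _)) (exp_pos _).le)
  rw [integral_neg] at hsub
  rw [integral_add hf2 hg] at hall
  rw [le_div_iff₀ (log_pos hL), mul_comm]
  linarith [integral_add_compl hs hfl]

end Moments

theorem OrthonormalBasis.volume_le_prod_of_repr_mem_Icc {ι V : Type*} [Fintype ι]
    [NormedAddCommGroup V] [InnerProductSpace ℝ V] [FiniteDimensional ℝ V]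
    [MeasurableSpace V] [BorelSpace V] (b : OrthonormalBasis ι ℝ V) {s : Set V} {a c : ι → ℝ}
    (h : ∀ x ∈ s, ∀ i, b.repr x i ∈ Icc (a i) (c i)) :
    volume s ≤ ∏ i, ENNReal.ofReal (c i - a i) := by
  have hmp := (PiLp.volume_preserving_ofLp ι).comp b.measurePreserving_repr
  calc volume s ≤ volume ((WithLp.ofLp ∘ b.repr) ⁻¹' Icc a c) :=
        measure_mono fun x hx => ⟨fun i => (h x hx i).1, fun i => (h x hx i).2⟩
    _ = ∏ i, ENNReal.ofReal (c i - a i) := by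
        rw [hmp.measure_preimage measurableSet_Icc.nullMeasurableSet, Real.volume_Icc_pi]

section Tube

variable {V : Type*} [NormedAddCommGroup V] [InnerProductSpace ℝ V]

/-- The closed `ρ`-neighbourhood of the line `v + ℝ e` (for a unit vector `e`). -/
def tube (v e : V) (ρ : ℝ) : Set V := {w | ‖w - v‖ ^ 2 - ⟪e, w - v⟫ ^ 2 ≤ ρ ^ 2}

theorem exists_orthonormalBasis_apply_zero_eq [FiniteDimensional ℝ V] {n : ℕ}
    (hn : finrank ℝ V = n + 1) {e : V} (he : ‖e‖ = 1) :
    ∃ b : OrthonormalBasis (Fin (n + 1)) ℝ V, b 0 = e := by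
  obtain ⟨b, hb⟩ := Orthonormal.exists_orthonormalBasis_extension_of_card_eq (ι := Fin (n + 1))
    (by simpa using hn) (v := fun _ => e) (s := {0}) (by simp [he])
  exact ⟨b, hb 0 rfl⟩

theorem OrthonormalBasis.norm_sq_sub_inner_sq_eq_sum {n : ℕ}
    (b : OrthonormalBasis (Fin (n + 1)) ℝ V) (x : V) :
    ‖x‖ ^ 2 - ⟪b 0, x⟫ ^ 2 = ∑ i : Fin n, ⟪b i.succ, x⟫ ^ 2 := by
  rw [← b.sum_sq_inner_right, Fin.sum_univ_succ, add_sub_cancel_left]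

theorem volume_ball_inter_tube_le [FiniteDimensional ℝ V] [MeasurableSpace V] [BorelSpace V]
    {n : ℕ} (b : OrthonormalBasis (Fin (n + 1)) ℝ V) (v : V) {R ρ : ℝ} (hρ : 0 ≤ ρ) :
    volume (Metric.ball 0 R ∩ tube v (b 0) ρ) ≤ ENNReal.ofReal (2 * R * (2 * ρ) ^ n) := by
  refine (b.volume_le_prod_of_repr_mem_Icc (a := Fin.cons (-R) fun i => b.repr v i.succ - ρ)
    (c := Fin.cons R fun i => b.repr v i.succ + ρ) ?_).trans_eq ?_
  · rintro w ⟨hwR, hwv⟩ i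
    refine Fin.cases ?_ (fun i => ?_) i
    · have h := abs_lt.mp ((abs_real_inner_le_norm (b 0) w).trans_lt (by simpa using hwR))
      simp only [Fin.cons_zero, mem_Icc, b.repr_apply_apply]
      constructor <;> linarith
    · have hi : ⟪b i.succ, w - v⟫ ^ 2 ≤ ρ ^ 2 :=
        (Finset.single_le_sum (f := fun j => ⟪b j.succ, w - v⟫ ^ 2) (fun j _ => sq_nonneg _)
          (Finset.mem_univ i)).trans ((b.norm_sq_sub_inner_sq_eq_sum (w - v)).symm.trans_le hwv)
      have h := abs_le_of_sq_le_sq' hi hρ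
      rw [inner_sub_right, ← b.repr_apply_apply, ← b.repr_apply_apply] at h
      simp only [Fin.cons_succ, mem_Icc]
      constructor <;> linarith
  · rw [Fin.prod_univ_succ]
    simp only [Fin.cons_zero, Fin.cons_succ, add_sub_sub_cancel, Finset.prod_const,
      Finset.card_univ, Fintype.card_fin]
    rw [← ENNReal.ofReal_pow (by linarith), ← ENNReal.ofReal_mul' (by positivity)]
    ring_nf

theorem div_pow_three_mul_sq_le_kernel {k : ℝ → ℝ}
    (hanti : AntitoneOn (fun r => k r / r) (Ioi 0)) {e z : V} {r ρ : ℝ} (hkr : 0 ≤ k r)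
    (hρ : ρ ^ 2 < ‖z‖ ^ 2 - ⟪e, z⟫ ^ 2) (hzr : ‖z‖ ≤ r) :
    k r / r ^ 3 * ρ ^ 2 ≤ k ‖z‖ / ‖z‖ * (1 - (⟪e, z⟫ / ‖z‖) ^ 2) := by
  have hz : 0 < ‖z‖ := by nlinarith [norm_nonneg z, sq_nonneg ρ, sq_nonneg ⟪e, z⟫]
  have hr : 0 < r := hz.trans_le hzr
  have hk : k r / r ≤ k ‖z‖ / ‖z‖ := hanti hz hr hzr
  have hangle : ρ ^ 2 / r ^ 2 ≤ 1 - (⟪e, z⟫ / ‖z‖) ^ 2 := by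
    rw [div_pow, one_sub_div (by positivity), div_le_div_iff₀ (by positivity) (by positivity)]
    have : ‖z‖ ^ 2 ≤ r ^ 2 := by gcongr
    nlinarith [sq_nonneg ρ]
  calc k r / r ^ 3 * ρ ^ 2 = k r / r * (ρ ^ 2 / r ^ 2) := by field_simp
    _ ≤ k ‖z‖ / ‖z‖ * (1 - (⟪e, z⟫ / ‖z‖) ^ 2) :=
        mul_le_mul hk hangle (by positivity) ((div_nonneg hkr hr.le).trans hk)

end Tube

theorem ofReal_mul_withDensity_le_setLIntegral {G : Type*} [MeasurableSpace G] [AddGroup G]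
    [MeasurableAdd G] {μ : Measure G} [μ.IsAddLeftInvariant] {f K : G → ℝ} (hfm : Measurable f)
    (hf0 : ∀ w, 0 ≤ f w) (v : G) {S T : Set G} (hS : MeasurableSet S) {c : ℝ} (hc : 0 ≤ c)
    (hK : ∀ z, v + z ∈ S → c ≤ K z) (hST : ∀ z, v + z ∈ S → z ∈ T) :
    ENNReal.ofReal c * μ.withDensity (fun w => ENNReal.ofReal (f w)) S ≤
      ∫⁻ z in T, ENNReal.ofReal (K z * f (v + z)) ∂μ := by
  calc ENNReal.ofReal c * μ.withDensity (fun w => ENNReal.ofReal (f w)) S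
      = ENNReal.ofReal c * ∫⁻ z in (v + ·) ⁻¹' S, ENNReal.ofReal (f (v + z)) ∂μ := by
        rw [withDensity_apply _ hS, ← (measurePreserving_add_left μ v)
          |>.setLIntegral_comp_preimage_emb (measurableEmbedding_addLeft v) _ S]
    _ = ∫⁻ z in (v + ·) ⁻¹' S, ENNReal.ofReal c * ENNReal.ofReal (f (v + z)) ∂μ :=
        (lintegral_const_mul _ (by fun_prop)).symm
    _ ≤ ∫⁻ z in (v + ·) ⁻¹' S, ENNReal.ofReal (K z * f (v + z)) ∂μ := by
        refine setLIntegral_mono' (measurable_const_add v hS) fun z hz => ?_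
        rw [← ENNReal.ofReal_mul hc]
        exact ENNReal.ofReal_le_ofReal (mul_le_mul_of_nonneg_right (hK z hz) (hf0 _))
    _ ≤ ∫⁻ z in T, ENNReal.ofReal (K z * f (v + z)) ∂μ := lintegral_mono_set fun z hz => hST z hz

local notation "ℝ³" => EuclideanSpace ℝ (Fin 3)

section Landau

variable {f : ℝ³ → ℝ}

theorem ofReal_half_le_withDensity_ball_diff_tube {m E H R L ρ : ℝ} (hm0 : 0 ≤ m)
    (hfm : Measurable f) (hf0 : ∀ w, 0 ≤ f w) (hfi : Integrable f) (hm : m ≤ ∫ w, f w)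
    (hf2 : Integrable (fun w => f w * ‖w‖ ^ 2)) (hE : ∫ w, f w * ‖w‖ ^ 2 ≤ E)
    (hfl : Integrable (fun w => f w * log (f w))) (hH : ∫ w, f w * log (f w) ≤ H)
    (hR : 0 < R) (hRE : 4 * E ≤ m * R ^ 2) (hL : 1 < L)
    (hLH : 8 * (H + E + ∫ w : ℝ³, exp (-‖w‖ ^ 2 - 1)) ≤ m * log L) (hρ : 0 ≤ ρ)
    (hLρ : 64 * L * R * ρ ^ 2 ≤ m) (v : ℝ³) (b : OrthonormalBasis (Fin 3) ℝ ℝ³) :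
    ENNReal.ofReal (m / 2) ≤
      volume.withDensity (fun w => ENNReal.ofReal (f w)) (Metric.ball 0 R \ tube v (b 0) ρ) := by
  set ν := volume.withDensity fun w => ENNReal.ofReal (f w)
  have hball : ENNReal.ofReal (3 / 4 * m) ≤ ν (Metric.ball 0 R) := by
    rw [withDensity_ofReal_apply_eq_ofReal_setIntegral hf0 hfi measurableSet_ball]
    refine ENNReal.ofReal_le_ofReal
      (le_trans ?_ (integral_sub_div_sq_le_setIntegral_ball hf0 hfi hf2 hR))
    have : (∫ w, f w * ‖w‖ ^ 2) / R ^ 2 ≤ m / 4 := by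
      rw [div_le_iff₀ (by positivity)]; linarith
    linarith
  have hlevel : ν {w | ENNReal.ofReal L < ENNReal.ofReal (f w)} ≤ ENNReal.ofReal (m / 8) := by
    refine (measure_mono (t := {w | L ≤ f w})
      fun w hw => (ENNReal.ofReal_lt_ofReal_iff'.1 hw).1.le).trans ?_
    rw [withDensity_ofReal_apply_eq_ofReal_setIntegral hf0 hfi
      (measurableSet_le measurable_const hfm)]
    refine ENNReal.ofReal_le_ofReal ((setIntegral_superlevel_le_div_log hL hfm hf0 hfi hfl hf2
      integrable_exp_neg_sq_norm_sub_one).trans ?_)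
    rw [div_le_iff₀ (log_pos hL)]
    linarith
  have hbad : ν (Metric.ball 0 R ∩ tube v (b 0) ρ) ≤ ENNReal.ofReal (m / 4) := by
    refine (withDensity_le_mul_add_withDensity_lt _ (ENNReal.ofReal L) _).trans
      ((add_le_add (mul_le_mul_right (volume_ball_inter_tube_le b v hρ) _) hlevel).trans ?_)
    rw [← ENNReal.ofReal_mul (by linarith), ← ENNReal.ofReal_add (by positivity) (by positivity)]
    exact ENNReal.ofReal_le_ofReal (by nlinarith)
  calc ENNReal.ofReal (m / 2) = ENNReal.ofReal (3 / 4 * m) - ENNReal.ofReal (m / 4) := by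
        rw [← ENNReal.ofReal_sub _ (by positivity)]; ring_nf
    _ ≤ ν (Metric.ball 0 R) - ν (Metric.ball 0 R ∩ tube v (b 0) ρ) := tsub_le_tsub hball hbad
    _ ≤ ν (Metric.ball 0 R \ tube v (b 0) ρ) := sdiff_self_inter ▸ le_measure_sdiff

theorem ofReal_le_setLIntegral_kernel {k : ℝ → ℝ} (hk : ∀ r, 0 < r → 0 < k r)
    (hanti : AntitoneOn (fun r => k r / r) (Ioi 0)) (hfm : Measurable f) (hf0 : ∀ w, 0 ≤ f w)
    {m R ρ δ : ℝ} (hR : 1 ≤ R) (hδ : δ ≤ ρ) (v e : ℝ³)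
    (hmass : ENNReal.ofReal (m / 2) ≤
      volume.withDensity (fun w => ENNReal.ofReal (f w)) (Metric.ball 0 R \ tube v e ρ)) :
    ENNReal.ofReal (ρ ^ 2 * m / (2 * R ^ 3) * k (‖v‖ + R) / (1 + ‖v‖) ^ 3) ≤
      ∫⁻ z in {z : ℝ³ | δ ≤ ‖z‖},
        ENNReal.ofReal (k ‖z‖ / ‖z‖ * (1 - (⟪e, z⟫ / ‖z‖) ^ 2) * f (v + z)) := by
  have hk0 : 0 < k (‖v‖ + R) := hk _ (by positivity)
  set c := k (‖v‖ + R) / (R ^ 3 * (1 + ‖v‖) ^ 3) * ρ ^ 2 with hc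
  have hgood : ∀ z, v + z ∈ Metric.ball 0 R \ tube v e ρ →
      ‖z‖ ≤ ‖v‖ + R ∧ ρ ^ 2 < ‖z‖ ^ 2 - ⟪e, z⟫ ^ 2 := by
    rintro z ⟨hzR, hzt⟩
    refine ⟨?_, by simpa only [tube, mem_ofPred_eq, add_sub_cancel_left, not_le] using hzt⟩
    have := norm_sub_le (v + z) v
    rw [add_sub_cancel_left] at this
    linarith [mem_ball_zero_iff.1 hzR]
  calc ENNReal.ofReal (ρ ^ 2 * m / (2 * R ^ 3) * k (‖v‖ + R) / (1 + ‖v‖) ^ 3)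
      = ENNReal.ofReal c * ENNReal.ofReal (m / 2) := by
        rw [← ENNReal.ofReal_mul (by positivity), hc]; congr 1; field_simp
    _ ≤ ENNReal.ofReal c * volume.withDensity (fun w => ENNReal.ofReal (f w))
          (Metric.ball 0 R \ tube v e ρ) := mul_le_mul_right hmass _
    _ ≤ _ := by
        refine ofReal_mul_withDensity_le_setLIntegral hfm hf0 v
          (measurableSet_ball.diff ?_) (by positivity) (fun z hz => ?_) (fun z hz => ?_)
        · exact (isClosed_le (by fun_prop) continuous_const).measurableSet
        · obtain ⟨hzr, hzρ⟩ := hgood z hz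
          refine le_trans ?_ (div_pow_three_mul_sq_le_kernel hanti hk0.le hzρ hzr)
          rw [hc, ← mul_pow]
          gcongr
          nlinarith [norm_nonneg v]
        · obtain ⟨-, hzρ⟩ := hgood z hz
          exact hδ.trans (abs_le_of_sq_le_sq' (by nlinarith [sq_nonneg ⟪e, z⟫]) (norm_nonneg z)).2

end Landau

theorem diffusion_matrix_lower_bound_general
    (m₀ M₀ E₀ H₀ : ℝ) (hm₀ : 0 < m₀) (hE₀ : 0 < E₀) (hH₀ : 0 < H₀) :
    ∃ δbar c₀ R₀ : ℝ, δbar ∈ Set.Ioo (0 : ℝ) 1 ∧ 0 < c₀ ∧ 0 < R₀ ∧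
      ∀ k : ℝ → ℝ,
        (∀ r, 0 < r → 0 < k r) →
        MonotoneOn k (Set.Ioi 0) →
        AntitoneOn (fun r => k r / r) (Set.Ioi 0) →
      ∀ f : EuclideanSpace ℝ (Fin 3) → ℝ,
        Measurable f → (∀ v, 0 ≤ f v) →
        Integrable f →
        m₀ ≤ ∫ v, f v → (∫ v, f v) ≤ M₀ →
        Integrable (fun v => f v * ‖v‖ ^ 2) →
        (∫ v, f v * ‖v‖ ^ 2) ≤ E₀ →
        Integrable (fun v => f v * Real.log (f v)) →
        (∫ v, f v * Real.log (f v)) ≤ H₀ →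
      ∀ δ, δ ∈ Set.Ioc (0 : ℝ) δbar →
      ∀ v e : EuclideanSpace ℝ (Fin 3), ‖e‖ = 1 →
        ENNReal.ofReal (c₀ * k (‖v‖ + R₀) / (1 + ‖v‖) ^ 3) ≤
          ∫⁻ z in {z : EuclideanSpace ℝ (Fin 3) | δ ≤ ‖z‖},
            ENNReal.ofReal
              (k ‖z‖ / ‖z‖ * (1 - ((inner ℝ e z : ℝ) / ‖z‖) ^ 2) * f (v + z)) := by
  set G := ∫ w : ℝ³, exp (-‖w‖ ^ 2 - 1)
  have hG : 0 ≤ G := integral_nonneg fun _ => (exp_pos _).le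
  obtain ⟨R₀, hR₀, hR₀E⟩ : ∃ R, 1 ≤ R ∧ 4 * E₀ ≤ m₀ * R ^ 2 :=
    ⟨max 1 √(4 * E₀ / m₀), le_max_left _ _,
      (div_le_iff₀' hm₀).1 ((sqrt_le_left (by positivity)).1 (le_max_right _ _))⟩
  obtain ⟨L, hL, hLH⟩ : ∃ L, 1 < L ∧ 8 * (H₀ + E₀ + G) ≤ m₀ * log L :=
    ⟨exp (8 * (H₀ + E₀ + G) / m₀), one_lt_exp_iff.2 (by positivity),
      by rw [log_exp, mul_div_cancel₀ _ hm₀.ne']⟩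
  obtain ⟨ρ, hρ, hLρ⟩ : ∃ ρ, 0 < ρ ∧ 64 * L * R₀ * ρ ^ 2 ≤ m₀ :=
    ⟨√(m₀ / (64 * L * R₀)), by positivity,
      by rw [sq_sqrt (by positivity), mul_div_cancel₀ _ (by positivity)]⟩
  refine ⟨min (1 / 2) ρ, ρ ^ 2 * m₀ / (2 * R₀ ^ 3), R₀,
    ⟨lt_min (by norm_num) hρ, (min_le_left _ _).trans_lt (by norm_num)⟩,
    by positivity, by positivity, ?_⟩
  intro k hk _ hanti f hfm hf0 hfi hm _ hf2 hE hfl hH δ hδ v e he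
  obtain ⟨b, rfl⟩ := exists_orthonormalBasis_apply_zero_eq finrank_euclideanSpace_fin he
  exact ofReal_le_setLIntegral_kernel hk hanti hfm hf0 hR₀ (hδ.2.trans (min_le_right _ _)) v _
    (ofReal_half_le_withDensity_ball_diff_tube hm₀.le hfm hf0 hfi hm hf2 hE hfl hH
      (by positivity) hR₀E hL hLH hρ.le hLρ v b)

/-- Diffusion matrix lower bound: the long-range part of the Landau
diffusion matrix is bounded below, as a quadratic form, by
`c₀ k(|v|+R₀)(1+|v|)⁻³` times the identity, with constants depending only on the
hydrodynamic bounds `m₀, M₀, E₀, H₀`. -/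
theorem diffusion_matrix_lower_bound
    (m₀ M₀ E₀ H₀ : ℝ) (hm₀ : 0 < m₀) (hmM : m₀ < M₀) (hE₀ : 0 < E₀) (hH₀ : 0 < H₀) :
    ∃ δbar c₀ R₀ : ℝ, δbar ∈ Set.Ioo (0 : ℝ) 1 ∧ 0 < c₀ ∧ 0 < R₀ ∧
      ∀ k : ℝ → ℝ,
        (∀ r, 0 < r → 0 < k r) →
        MonotoneOn k (Set.Ioi 0) →
        AntitoneOn (fun r => k r / r) (Set.Ioi 0) →
      ∀ f : EuclideanSpace ℝ (Fin 3) → ℝ,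
        Measurable f → (∀ v, 0 ≤ f v) →
        Integrable f →
        m₀ ≤ ∫ v, f v → (∫ v, f v) ≤ M₀ →
        Integrable (fun v => f v * ‖v‖ ^ 2) →
        (∫ v, f v * ‖v‖ ^ 2) ≤ E₀ →
        Integrable (fun v => f v * Real.log (f v)) →
        (∫ v, f v * Real.log (f v)) ≤ H₀ →
      ∀ δ, δ ∈ Set.Ioc (0 : ℝ) δbar →
      ∀ v e : EuclideanSpace ℝ (Fin 3), ‖e‖ = 1 →
        ENNReal.ofReal (c₀ * k (‖v‖ + R₀) / (1 + ‖v‖) ^ 3) ≤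
          ∫⁻ z in {z : EuclideanSpace ℝ (Fin 3) | δ ≤ ‖z‖},
            ENNReal.ofReal
              (k ‖z‖ / ‖z‖ * (1 - ((inner ℝ e z : ℝ) / ‖z‖) ^ 2) * f (v + z)) :=
  diffusion_matrix_lower_bound_general m₀ M₀ E₀ H₀ hm₀ hE₀ hH₀
end

section
/- Pointwise truncation inequality. Let Γ(r) := min(r, r²) for r ≥ 0. For all real numbers κ, κ̄ with 1 ≤ κ < κ̄ < κ + 1 and every y ≥ 0, one has (y − κ̄)₊ ≤ (6 κ̄ / (√κ̄ − √κ)⁴) · Γ( (√y − √κ)₊ )². -/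
set_option maxHeartbeats 1600000 in
/-- Pointwise truncation inequality: with `Γ(r) = min(r, r²)`,
for `1 ≤ κ < κ' < κ + 1` and `y ≥ 0`,
`(y − κ')₊ ≤ (6κ'/(√κ' − √κ)⁴) Γ((√y − √κ)₊)²`. -/
theorem pointwise_truncation_inequality
    (κ κ' y : ℝ) (hκ : 1 ≤ κ) (hκκ' : κ < κ') (hκ'κ : κ' < κ + 1) (hy : 0 ≤ y) :
    max (y - κ') 0 ≤
      6 * κ' / (Real.sqrt κ' - Real.sqrt κ) ^ 4 *
        (min (max (Real.sqrt y - Real.sqrt κ) 0)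
          ((max (Real.sqrt y - Real.sqrt κ) 0) ^ 2)) ^ 2 := by
  set a := Real.sqrt κ with ha
  set b := Real.sqrt κ' with hb
  set c := Real.sqrt y with hc
  have ha0 : 0 ≤ a := Real.sqrt_nonneg _
  have hb0 : 0 ≤ b := Real.sqrt_nonneg _
  have hc0 : 0 ≤ c := Real.sqrt_nonneg _
  have ha2 : a ^ 2 = κ := Real.sq_sqrt (by linarith)
  have hb2 : b ^ 2 = κ' := Real.sq_sqrt (by linarith)
  have hc2 : c ^ 2 = y := Real.sq_sqrt hy
  have ha1 : 1 ≤ a := by nlinarith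
  have hab : a < b := Real.sqrt_lt_sqrt (by linarith) hκκ'
  have hd0 : 0 < (b - a) ^ 4 := pow_pos (sub_pos.mpr hab) 4
  have hba1 : b ^ 2 - a ^ 2 < 1 := by rw [ha2, hb2]; linarith
  have hdhalf : b - a ≤ 1 / 2 := by nlinarith
  rcases le_or_gt c b with hcb | hcb
  · have hyk : y - κ' ≤ 0 := by nlinarith
    rw [max_eq_right hyk]
    exact mul_nonneg (div_nonneg (by linarith) hd0.le) (sq_nonneg _)
  · have hca : b - a < c - a := by linarith
    have ht0 : 0 < c - a := by linarith
    have hmax : max (c - a) 0 = c - a := max_eq_left ht0.le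
    have hyk : 0 ≤ y - κ' := by nlinarith
    rw [max_eq_left hyk, hmax, div_mul_eq_mul_div, le_div_iff₀ hd0]
    set t := c - a with htdef
    have h1 : c - b ≤ t := by linarith
    have hcb' : 0 ≤ c - b := by linarith
    rcases le_or_gt t 1 with ht1 | ht1
    · have hmin : min t (t ^ 2) = t ^ 2 := min_eq_right (by nlinarith)
      rw [hmin]
      have h2 : c + b ≤ 3 * b ^ 2 := by nlinarith
      have hd3 : (b - a) ^ 3 ≤ t ^ 3 := pow_le_pow_left₀ (by linarith) hca.le 3
      have h3 : (b - a) ^ 4 ≤ 2 * t ^ 3 := by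
        have hh : (b - a) ^ 3 * (b - a) ≤ t ^ 3 * 1 :=
          mul_le_mul hd3 (by linarith) (by linarith) (by positivity)
        nlinarith [hh]
      have step : (c - b) * ((c + b) * (b - a) ^ 4) ≤ t * (3 * b ^ 2 * (2 * t ^ 3)) :=
        mul_le_mul h1 (mul_le_mul h2 h3 hd0.le (by nlinarith))
          (mul_nonneg (by linarith) hd0.le) ht0.le
      have key : (c ^ 2 - b ^ 2) * (b - a) ^ 4 ≤ 6 * b ^ 2 * (t ^ 2) ^ 2 := by nlinarith [step]
      calc (y - κ') * (b - a) ^ 4 = (c ^ 2 - b ^ 2) * (b - a) ^ 4 := by rw [hc2, hb2]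
        _ ≤ 6 * b ^ 2 * (t ^ 2) ^ 2 := key
        _ = 6 * κ' * (t ^ 2) ^ 2 := by rw [hb2]
    · have hmin : min t (t ^ 2) = t := min_eq_left (by nlinarith)
      rw [hmin]
      have hsd : (b - a) * (a + b) ≤ 1 := by nlinarith
      have hd3 : (b - a) ^ 3 ≤ (1 / 2) ^ 3 := pow_le_pow_left₀ (by linarith) hdhalf 3
      have hd4 : (b - a) ^ 4 ≤ (1 / 2) ^ 4 := pow_le_pow_left₀ (by linarith) hdhalf 4
      have h4 : (a + b + 1) * (b - a) ^ 4 ≤ 1 := by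
        have hh : (b - a) * (a + b) * (b - a) ^ 3 ≤ 1 * (b - a) ^ 3 :=
          mul_le_mul_of_nonneg_right hsd (pow_nonneg (by linarith) 3)
        nlinarith [hh]
      have h5 : c + b ≤ (a + b + 1) * t := by nlinarith
      have step : (c - b) * ((c + b) * (b - a) ^ 4) ≤ t * ((a + b + 1) * t * (b - a) ^ 4) :=
        mul_le_mul h1 (mul_le_mul_of_nonneg_right h5 hd0.le)
          (mul_nonneg (by linarith) hd0.le) ht0.le
      have step2 : (a + b + 1) * (b - a) ^ 4 * t ^ 2 ≤ 1 * t ^ 2 :=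
        mul_le_mul_of_nonneg_right h4 (sq_nonneg t)
      have hbt : 1 * t ^ 2 ≤ 6 * b ^ 2 * t ^ 2 := by
        nlinarith [mul_nonneg (show (0:ℝ) ≤ 6 * b ^ 2 - 1 by nlinarith) (sq_nonneg t)]
      have key : (c ^ 2 - b ^ 2) * (b - a) ^ 4 ≤ 6 * b ^ 2 * t ^ 2 := by
        nlinarith [step, step2, hbt]
      calc (y - κ') * (b - a) ^ 4 = (c ^ 2 - b ^ 2) * (b - a) ^ 4 := by rw [hc2, hb2]
        _ ≤ 6 * b ^ 2 * t ^ 2 := key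
        _ = 6 * κ' * t ^ 2 := by rw [hb2]
end

section
/- Angular kernel estimate. For all real numbers A, B, σ > 0, one has ∫₀^π 1_{A² + 2B²(1−cos θ) ≤ σ²} · (A² + 2B²(1−cos θ))^{−1/2} dθ ≤ (π/(2B)) ( ln 2 + ln₊(σ/A) ). -/
open intervalIntegral Real Set MeasureTheory

/-!
Jordan's inequality `1 - cos θ ≥ 2θ²/π²` on `[-π, π]` bounds the kernel by
`(A² + (cθ)²)^{-1/2}` with `c = 2B/π`, and shows that it vanishes once `cθ > √(σ² - A²)`
(for `σ² < A²` this square root is `0` and the kernel vanishes identically).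
The comparison kernel integrates to `c⁻¹ arsinh (cθ/A)`, and for `A ≤ |σ|`,
`arsinh (√(σ² - A²)/A) = log ((√(σ² - A²) + |σ|)/A) ≤ log (2|σ|/A)`.
-/

theorem mul_sq_le_two_mul_sq_mul_one_sub_cos (B : ℝ) {θ : ℝ} (hθ : |θ| ≤ π) :
    (2 * B / π * θ) ^ 2 ≤ 2 * B ^ 2 * (1 - cos θ) := by
  have hJordan := cos_le_one_sub_mul_cos_sq hθ
  calc (2 * B / π * θ) ^ 2 = 2 * B ^ 2 * (2 / π ^ 2 * θ ^ 2) := by field_simp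
    _ ≤ 2 * B ^ 2 * (1 - cos θ) := by gcongr; linarith

theorem hasDerivAt_inv_mul_arsinh_mul_div {A c : ℝ} (hA : 0 < A) (hc : c ≠ 0) (θ : ℝ) :
    HasDerivAt (fun t => c⁻¹ * arsinh (c * t / A)) (√(A ^ 2 + (c * θ) ^ 2))⁻¹ θ := by
  have hlin : HasDerivAt (fun t : ℝ => c * t / A) (c / A) θ := by
    simpa using ((hasDerivAt_id θ).const_mul c).div_const A
  refine (((hasDerivAt_arsinh (c * θ / A)).comp θ hlin).const_mul c⁻¹).congr_deriv ?_
  have hsqrt : √(1 + (c * θ / A) ^ 2) = √(A ^ 2 + (c * θ) ^ 2) / A := by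
    rw [← sqrt_sq hA.le, ← sqrt_div' _ (by positivity), sqrt_sq hA.le]
    congr 1
    field_simp
  have hpos : 0 < √(A ^ 2 + (c * θ) ^ 2) := sqrt_pos.mpr (by positivity)
  rw [hsqrt]
  field_simp

theorem integral_inv_sqrt_sq_add_mul_sq {A c : ℝ} (hA : 0 < A) (hc : c ≠ 0) (T : ℝ) :
    ∫ θ in (0 : ℝ)..T, (√(A ^ 2 + (c * θ) ^ 2))⁻¹ = c⁻¹ * arsinh (c * T / A) := by
  have hcont : Continuous fun θ : ℝ => (√(A ^ 2 + (c * θ) ^ 2))⁻¹ :=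
    (by fun_prop : Continuous fun θ : ℝ => √(A ^ 2 + (c * θ) ^ 2)).inv₀
      fun θ => (sqrt_pos.mpr (by positivity)).ne'
  rw [integral_eq_sub_of_hasDerivAt (fun θ _ => hasDerivAt_inv_mul_arsinh_mul_div hA hc θ)
    (hcont.intervalIntegrable 0 T)]
  simp

theorem integral_le_inv_mul_arsinh {f : ℝ → ℝ} {A c s b : ℝ} (hA : 0 < A) (hc : 0 < c)
    (hs : 0 ≤ s) (hb : 0 ≤ b) (hf : IntervalIntegrable f volume 0 b)
    (hle : ∀ θ ∈ Icc 0 b, f θ ≤ (√(A ^ 2 + (c * θ) ^ 2))⁻¹)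
    (hzero : ∀ θ ∈ Icc 0 b, s < c * θ → f θ = 0) :
    ∫ θ in (0 : ℝ)..b, f θ ≤ c⁻¹ * arsinh (s / A) := by
  set T := min b (s / c)
  have hT0 : 0 ≤ T := le_min hb (by positivity)
  have hTb : T ≤ b := min_le_left _ _
  have hcT : c * T ≤ s := by
    calc c * T ≤ c * (s / c) := by gcongr; exact min_le_right _ _
      _ = s := mul_div_cancel₀ s hc.ne'
  have htail : ∫ θ in T..b, f θ = 0 := by
    rw [integral_of_le hTb]
    refine setIntegral_eq_zero_of_forall_eq_zero fun θ ⟨hTθ, hθb⟩ => hzero θ ⟨by linarith, hθb⟩ ?_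
    rcases min_lt_iff.mp hTθ with h | h
    · exact absurd hθb h.not_ge
    · exact (div_lt_iff₀' hc).mp h
  have hT : T ∈ uIcc 0 b := by rw [uIcc_of_le hb]; exact ⟨hT0, hTb⟩
  have hfT : IntervalIntegrable f volume 0 T := hf.mono_set (uIcc_subset_uIcc_left hT)
  calc ∫ θ in (0 : ℝ)..b, f θ = ∫ θ in (0 : ℝ)..T, f θ := by
        rw [← integral_add_adjacent_intervals hfT (hf.mono_set (uIcc_subset_uIcc_right hT)),
          htail, add_zero]
    _ ≤ ∫ θ in (0 : ℝ)..T, (√(A ^ 2 + (c * θ) ^ 2))⁻¹ := by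
        refine integral_mono_on hT0 hfT ?_ fun θ hθ => hle θ ⟨hθ.1, hθ.2.trans hTb⟩
        exact (Continuous.inv₀ (by fun_prop) fun θ =>
          (sqrt_pos.mpr (by positivity)).ne').intervalIntegrable _ _
    _ = c⁻¹ * arsinh (c * T / A) := integral_inv_sqrt_sq_add_mul_sq hA hc.ne' T
    _ ≤ c⁻¹ * arsinh (s / A) := by gcongr

theorem arsinh_sqrt_sq_sub_sq_div_le {A : ℝ} (hA : 0 < A) (σ : ℝ) :
    arsinh (√(σ ^ 2 - A ^ 2) / A) ≤ log 2 + max (log (σ / A)) 0 := by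
  rcases lt_or_ge (σ ^ 2) (A ^ 2) with hσA | hAσ
  · rw [sqrt_eq_zero_of_nonpos (by linarith), zero_div, arsinh_zero]
    positivity
  have hsqrt : √(1 + (√(σ ^ 2 - A ^ 2) / A) ^ 2) = |σ| / A := by
    rw [div_pow, sq_sqrt (sub_nonneg.mpr hAσ), ← sqrt_sq (by positivity : 0 ≤ |σ| / A), div_pow,
      sq_abs]
    congr 1
    field_simp
    ring
  have hle : √(σ ^ 2 - A ^ 2) ≤ |σ| := by
    rw [← sqrt_sq_eq_abs]
    exact sqrt_le_sqrt (by linarith [sq_nonneg A])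
  have hσ : 0 < |σ| := hA.trans_le (abs_of_pos hA ▸ sq_le_sq.mp hAσ)
  calc arsinh (√(σ ^ 2 - A ^ 2) / A) = log (√(σ ^ 2 - A ^ 2) / A + |σ| / A) := by
        rw [arsinh, hsqrt]
    _ ≤ log (2 * (|σ| / A)) := log_le_log (by positivity) (by rw [two_mul]; gcongr)
    _ = log 2 + log (σ / A) := by
        rw [log_mul two_ne_zero (by positivity), ← abs_of_pos hA, ← abs_div, log_abs, abs_of_pos hA]
    _ ≤ log 2 + max (log (σ / A)) 0 := by gcongr; exact le_max_left _ _

noncomputable def angularKernel (A B σ θ : ℝ) : ℝ :=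
  if A ^ 2 + 2 * B ^ 2 * (1 - cos θ) ≤ σ ^ 2 then (√(A ^ 2 + 2 * B ^ 2 * (1 - cos θ)))⁻¹ else 0

section angularKernel

variable {A B θ : ℝ}

theorem abs_angularKernel_le (hA : 0 < A) (σ : ℝ) : |angularKernel A B σ θ| ≤ A⁻¹ := by
  unfold angularKernel
  split_ifs
  · rw [abs_of_nonneg (by positivity)]
    refine inv_anti₀ hA ?_
    calc A = √(A ^ 2) := (sqrt_sq hA.le).symm
      _ ≤ √(A ^ 2 + 2 * B ^ 2 * (1 - cos θ)) :=
        sqrt_le_sqrt (by nlinarith [cos_le_one θ, sq_nonneg B])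
  · simpa using hA.le

theorem intervalIntegrable_angularKernel (hA : 0 < A) (σ a b : ℝ) :
    IntervalIntegrable (angularKernel A B σ) volume a b := by
  have hmeas : Measurable (angularKernel A B σ) :=
    Measurable.ite (measurableSet_le (by fun_prop) measurable_const) (by fun_prop)
      measurable_const
  refine (intervalIntegrable_const (c := A⁻¹)).mono_fun hmeas.aestronglyMeasurable ?_
  filter_upwards with θ
  simpa [abs_of_pos hA] using abs_angularKernel_le (B := B) (θ := θ) hA σ

theorem angularKernel_le (hA : 0 < A) (σ : ℝ) (hθ : |θ| ≤ π) :
    angularKernel A B σ θ ≤ (√(A ^ 2 + (2 * B / π * θ) ^ 2))⁻¹ := by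
  unfold angularKernel
  split_ifs
  · exact inv_anti₀ (sqrt_pos.mpr (by positivity))
      (sqrt_le_sqrt (by linarith [mul_sq_le_two_mul_sq_mul_one_sub_cos B hθ]))
  · positivity

theorem angularKernel_eq_zero (σ : ℝ) (hθ : |θ| ≤ π) (h : √(σ ^ 2 - A ^ 2) < 2 * B / π * θ) :
    angularKernel A B σ θ = 0 := by
  refine if_neg fun hle => h.not_ge ((le_abs_self _).trans (abs_le_sqrt ?_))
  linarith [mul_sq_le_two_mul_sq_mul_one_sub_cos B hθ]

end angularKernel

theorem angular_kernel_estimate_general (A B σ : ℝ) (hA : 0 < A) (hB : 0 < B) :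
    (∫ θ in (0 : ℝ)..Real.pi,
        if A ^ 2 + 2 * B ^ 2 * (1 - Real.cos θ) ≤ σ ^ 2 then
          (Real.sqrt (A ^ 2 + 2 * B ^ 2 * (1 - Real.cos θ)))⁻¹ else 0) ≤
      Real.pi / (2 * B) * (Real.log 2 + max (Real.log (σ / A)) 0) := by
  have hθ : ∀ θ ∈ Icc 0 π, |θ| ≤ π := fun θ hθ => abs_le.mpr ⟨by linarith [hθ.1, pi_pos], hθ.2⟩
  calc ∫ θ in (0 : ℝ)..π, angularKernel A B σ θ
      ≤ (2 * B / π)⁻¹ * arsinh (√(σ ^ 2 - A ^ 2) / A) :=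
        integral_le_inv_mul_arsinh hA (by positivity) (sqrt_nonneg _) pi_pos.le
          (intervalIntegrable_angularKernel hA σ 0 π)
          (fun θ h => angularKernel_le hA σ (hθ θ h)) (fun θ h => angularKernel_eq_zero σ (hθ θ h))
    _ ≤ π / (2 * B) * (log 2 + max (log (σ / A)) 0) := by
        rw [inv_div]
        gcongr
        exact arsinh_sqrt_sq_sub_sq_div_le hA σ

/-- Angular kernel estimate: for all `A, B, σ > 0`,
`∫₀^π 1_{A²+2B²(1−cos θ) ≤ σ²} (A²+2B²(1−cos θ))^{−1/2} dθ
  ≤ (π/(2B))(ln 2 + ln₊(σ/A))`. -/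
theorem angular_kernel_estimate (A B σ : ℝ) (hA : 0 < A) (hB : 0 < B) (hσ : 0 < σ) :
    (∫ θ in (0 : ℝ)..Real.pi,
        if A ^ 2 + 2 * B ^ 2 * (1 - Real.cos θ) ≤ σ ^ 2 then
          (Real.sqrt (A ^ 2 + 2 * B ^ 2 * (1 - Real.cos θ)))⁻¹ else 0) ≤
      Real.pi / (2 * B) * (Real.log 2 + max (Real.log (σ / A)) 0) :=
  angular_kernel_estimate_general A B σ hA hB
end

section
/- Derivative bounds for the truncated collision matrix. Let k ∈ C¹((0,∞)) be positive and nondecreasing with r ↦ k(r)/r nonincreasing, and let X ∈ C^∞(ℝ) satisfy X = 0 on (−∞,1/2], X = 1 on [1,∞), 0 ≤ X ≤ 1 and 0 ≤ X′ ≤ 3. For δ ∈ (0,1) define a^out_δ(z) := X(|z|/δ) (k(|z|)/|z|) Π(z) for z ≠ 0 (extended by 0 at z = 0). Then a^out_δ is C¹ on ℝ³ \ {0}, and for every z with |z| ≥ δ/2: | ∑_j ∂_{z_j} (a^out_δ)_{ij}(z) | ≤ 8 k(δ/2)/δ² for each i, and | ∑_{i,j} ∂_{z_i} ∂_{z_j}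 (a^out_δ)_{ij}(z) | ≤ 40 k(δ/2)/δ³. -/
open Set

noncomputable section
local notation "E" => EuclideanSpace ℝ (Fin 3)

lemma hasFDerivAt_norm3 {z : E} (hz : z ≠ 0) :
    HasFDerivAt (fun y : E => ‖y‖) (‖z‖⁻¹ • (innerSL ℝ z : E →L[ℝ] ℝ)) z := by
  have h1 : HasFDerivAt (fun y : E => ‖y‖ ^ 2) (2 • (innerSL ℝ z)) z := by
    simpa using (hasFDerivAt_id z).norm_sq
  have h2 := h1.sqrt (by have := norm_pos_iff.2 hz; positivity)
  have hn : (fun y : E => Real.sqrt (‖y‖ ^ 2)) = fun y : E => ‖y‖ := by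
    funext y; exact Real.sqrt_sq (norm_nonneg y)
  rw [hn] at h2
  refine h2.congr_fderiv ?_
  rw [Real.sqrt_sq (norm_nonneg z)]
  ext v
  simp [smul_smul]
  ring

lemma deriv_nonneg_of_monoOn {f : ℝ → ℝ} {d r : ℝ} (hr : 0 < r)
    (hm : MonotoneOn f (Set.Ioi 0)) (hd : HasDerivAt f d r) : 0 ≤ d := by
  have h : HasDerivWithinAt f d (Set.Ioi r) r := hd.hasDerivWithinAt
  rw [hasDerivWithinAt_iff_tendsto_slope] at h
  have hne : (nhdsWithin r (Set.Ioi r \ {r})).NeBot := by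
    have : Set.Ioi r \ {r} = Set.Ioi r := by
      ext x
      simp only [Set.mem_diff, Set.mem_Ioi, Set.mem_singleton_iff, and_iff_left_iff_imp]
      intro h; exact ne_of_gt h
    rw [this]
    exact nhdsGT_neBot r
  refine ge_of_tendsto h ?_
  filter_upwards [self_mem_nhdsWithin] with y hy
  obtain ⟨hy1, -⟩ := hy
  have : f r ≤ f y := hm hr (lt_trans hr hy1) (le_of_lt hy1)
  have hyr : 0 < y - r := by simp at hy1 ⊢; linarith
  rw [slope_def_field]
  exact div_nonneg (by linarith) hyr.le

lemma deriv_nonpos_of_antiOn {f : ℝ → ℝ} {d r : ℝ} (hr : 0 < r)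
    (hm : AntitoneOn f (Set.Ioi 0)) (hd : HasDerivAt f d r) : d ≤ 0 := by
  have : 0 ≤ -d := deriv_nonneg_of_monoOn hr hm.neg hd.neg
  linarith

lemma hasFDerivAt_Aij {c : ℝ → ℝ} {c' : ℝ} {z : E} (hz : z ≠ 0)
    (hc : HasDerivAt c c' ‖z‖) (i j : Fin 3) :
    HasFDerivAt (fun y : E => c ‖y‖ * ((if i = j then (1:ℝ) else 0) / ‖y‖ - y i * y j / ‖y‖ ^ 3))
      ((if i = j then (1:ℝ) else 0) • (((c' * ‖z‖ - c ‖z‖ * 1) / ‖z‖ ^ 2) • (‖z‖⁻¹ • (innerSL ℝ z : E →L[ℝ] ℝ)))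
        - ((c ‖z‖ / ‖z‖ ^ 3) • (z i • (EuclideanSpace.proj j : E →L[ℝ] ℝ) + z j • (EuclideanSpace.proj i : E →L[ℝ] ℝ))
           + (z i * z j) • (((c' * ‖z‖ ^ 3 - c ‖z‖ * ((3:ℕ) * ‖z‖ ^ 2)) / (‖z‖ ^ 3) ^ 2) • (‖z‖⁻¹ • (innerSL ℝ z : E →L[ℝ] ℝ))))) z := by
  have hr : (0:ℝ) < ‖z‖ := norm_pos_iff.2 hz
  have hN := hasFDerivAt_norm3 hz
  have hF : HasFDerivAt (fun y : E => c ‖y‖ / ‖y‖)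
      (((c' * ‖z‖ - c ‖z‖ * 1) / ‖z‖ ^ 2) • (‖z‖⁻¹ • (innerSL ℝ z : E →L[ℝ] ℝ))) z := by
    simpa [Function.comp_def, Pi.div_def] using
      (HasDerivAt.comp_hasFDerivAt z (hc.div (hasDerivAt_id ‖z‖) hr.ne') hN)
  have hG : HasFDerivAt (fun y : E => c ‖y‖ / ‖y‖ ^ 3)
      (((c' * ‖z‖ ^ 3 - c ‖z‖ * ((3:ℕ) * ‖z‖ ^ 2)) / (‖z‖ ^ 3) ^ 2) • (‖z‖⁻¹ • (innerSL ℝ z : E →L[ℝ] ℝ))) z := by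
    have hp : HasDerivAt (fun s : ℝ => s ^ 3) ((3:ℕ) * ‖z‖ ^ 2) ‖z‖ := by
      simpa using hasDerivAt_pow 3 ‖z‖
    simpa [Function.comp_def, Pi.div_def] using
      (HasDerivAt.comp_hasFDerivAt z (hc.div hp (pow_ne_zero 3 hr.ne')) hN)
  have hij : HasFDerivAt (fun y : E => y i * y j)
      ((z i) • (EuclideanSpace.proj j : E →L[ℝ] ℝ) + (z j) • (EuclideanSpace.proj i : E →L[ℝ] ℝ)) z := by
    simpa [Pi.mul_def] using ((EuclideanSpace.proj i : E →L[ℝ] ℝ).hasFDerivAt (x := z)).mul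
      ((EuclideanSpace.proj j : E →L[ℝ] ℝ).hasFDerivAt (x := z))
  have heq : (fun y : E => c ‖y‖ * ((if i = j then (1:ℝ) else 0) / ‖y‖ - y i * y j / ‖y‖ ^ 3))
      = fun y : E => (if i = j then (1:ℝ) else 0) * (c ‖y‖ / ‖y‖) - (c ‖y‖ / ‖y‖ ^ 3) * (y i * y j) := by
    funext y; ring
  rw [heq]
  exact (hF.const_mul _).sub (hG.mul hij)

lemma div_formula {c : ℝ → ℝ} {c' : ℝ} {z : E} (hz : z ≠ 0)
    (hc : HasDerivAt c c' ‖z‖) (i : Fin 3) :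
    ∑ j : Fin 3, fderiv ℝ (fun y : E => c ‖y‖ * ((if i = j then (1:ℝ) else 0) / ‖y‖ - y i * y j / ‖y‖ ^ 3)) z
      (EuclideanSpace.single j 1) = -2 * c ‖z‖ * z i / ‖z‖ ^ 3 := by
  have hr : (0:ℝ) < ‖z‖ := norm_pos_iff.2 hz
  have hsq : z 0 * z 0 + z 1 * z 1 + z 2 * z 2 = ‖z‖ ^ 2 := by
    have h := real_inner_self_eq_norm_sq z
    rw [PiLp.inner_apply] at h
    simpa [Fin.sum_univ_three, ← sq] using h
  rw [Fin.sum_univ_three,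
    (hasFDerivAt_Aij hz hc i 0).fderiv, (hasFDerivAt_Aij hz hc i 1).fderiv,
    (hasFDerivAt_Aij hz hc i 2).fderiv]
  simp only [ContinuousLinearMap.sub_apply, ContinuousLinearMap.add_apply,
    ContinuousLinearMap.smul_apply, innerSL_apply_apply, EuclideanSpace.inner_single_right,
    PiLp.proj_apply, EuclideanSpace.single_apply, smul_eq_mul, conj_trivial]
  set_option maxHeartbeats 1000000 in
  fin_cases i <;>
    simp only [Fin.zero_eta, Fin.mk_one, Fin.reduceFinMk, Fin.isValue, Fin.reduceEq, reduceIte,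
      one_mul, zero_mul, mul_one, mul_zero, add_zero, zero_add, Nat.cast_ofNat] <;>
    field_simp <;> ring_nf
  · linear_combination ((3 * c ‖z‖ - ‖z‖ * c') * z 0) * hsq
  · linear_combination ((3 * c ‖z‖ - ‖z‖ * c') * z 1) * hsq
  · linear_combination ((3 * c ‖z‖ - ‖z‖ * c') * z 2) * hsq

lemma hasFDerivAt_nice {c : ℝ → ℝ} {c' : ℝ} {z : E} (hz : z ≠ 0)
    (hc : HasDerivAt c c' ‖z‖) (i : Fin 3) :
    HasFDerivAt (fun y : E => -2 * c ‖y‖ * y i / ‖y‖ ^ 3)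
      ((-2 * c ‖z‖ / ‖z‖ ^ 3) • (EuclideanSpace.proj i : E →L[ℝ] ℝ)
        + z i • ((((-2 * c') * ‖z‖ ^ 3 - (-2 * c ‖z‖) * ((3:ℕ) * ‖z‖ ^ 2)) / (‖z‖ ^ 3) ^ 2) •
            (‖z‖⁻¹ • (innerSL ℝ z : E →L[ℝ] ℝ)))) z := by
  have hr : (0:ℝ) < ‖z‖ := norm_pos_iff.2 hz
  have hp : HasDerivAt (fun s : ℝ => s ^ 3) ((3:ℕ) * ‖z‖ ^ 2) ‖z‖ := by
    simpa using hasDerivAt_pow 3 ‖z‖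
  have hR : HasFDerivAt (fun y : E => -2 * c ‖y‖ / ‖y‖ ^ 3)
      ((((-2 * c') * ‖z‖ ^ 3 - (-2 * c ‖z‖) * ((3:ℕ) * ‖z‖ ^ 2)) / (‖z‖ ^ 3) ^ 2) •
        (‖z‖⁻¹ • (innerSL ℝ z : E →L[ℝ] ℝ))) z := by
    simpa [Function.comp_def, Pi.div_def] using
      (HasDerivAt.comp_hasFDerivAt z ((hc.const_mul (-2)).div hp (pow_ne_zero 3 hr.ne'))
        (hasFDerivAt_norm3 hz))
  have heq : (fun y : E => -2 * c ‖y‖ * y i / ‖y‖ ^ 3)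
      = fun y : E => (-2 * c ‖y‖ / ‖y‖ ^ 3) * y i := by funext y; ring
  rw [heq]
  exact hR.mul ((EuclideanSpace.proj i : E →L[ℝ] ℝ).hasFDerivAt (x := z))

lemma div2_formula {c : ℝ → ℝ} {c' : ℝ} {z : E} (hz : z ≠ 0)
    (hc : HasDerivAt c c' ‖z‖) :
    ∑ i : Fin 3, fderiv ℝ (fun y : E => -2 * c ‖y‖ * y i / ‖y‖ ^ 3) z
      (EuclideanSpace.single i 1) = -2 * c' / ‖z‖ ^ 2 := by
  have hr : (0:ℝ) < ‖z‖ := norm_pos_iff.2 hz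
  have hsq : z 0 * z 0 + z 1 * z 1 + z 2 * z 2 = ‖z‖ ^ 2 := by
    have h := real_inner_self_eq_norm_sq z
    rw [PiLp.inner_apply] at h
    simpa [Fin.sum_univ_three, ← sq] using h
  rw [Fin.sum_univ_three,
    (hasFDerivAt_nice hz hc 0).fderiv, (hasFDerivAt_nice hz hc 1).fderiv,
    (hasFDerivAt_nice hz hc 2).fderiv]
  simp only [ContinuousLinearMap.add_apply, ContinuousLinearMap.smul_apply, innerSL_apply_apply,
    EuclideanSpace.inner_single_right, PiLp.proj_apply, EuclideanSpace.single_apply,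
    smul_eq_mul, conj_trivial, Fin.isValue, Fin.reduceEq, reduceIte, one_mul, zero_mul,
    mul_one, mul_zero, add_zero, zero_add, Nat.cast_ofNat]
  field_simp
  ring_nf
  linear_combination (3 * c ‖z‖ - ‖z‖ * c') * hsq


/-- Derivative bounds for the truncated collision matrix
`a^out_δ(z) = X(|z|/δ)(k(|z|)/|z|)Π(z)`: it is `C¹` on `ℝ³ \ {0}` and, for
`|z| ≥ δ/2`, its row-wise divergence is bounded by `8 k(δ/2)/δ²` and the iterated
divergence `∑_{i,j} ∂_{z_i}∂_{z_j}(a^out_δ)_{ij}` is bounded by `40 k(δ/2)/δ³`. -/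
theorem truncated_collision_matrix_derivative_bounds
    (k : ℝ → ℝ) (hk : ContDiffOn ℝ 1 k (Set.Ioi 0))
    (hkpos : ∀ r, 0 < r → 0 < k r)
    (hkmono : MonotoneOn k (Set.Ioi 0))
    (hkanti : AntitoneOn (fun r => k r / r) (Set.Ioi 0))
    (X : ℝ → ℝ) (hX : ContDiff ℝ (⊤ : ℕ∞) X)
    (hX0 : ∀ x, x ≤ 1 / 2 → X x = 0) (hX1 : ∀ x, 1 ≤ x → X x = 1)
    (hXb : ∀ x, 0 ≤ X x ∧ X x ≤ 1) (hXd : ∀ x, 0 ≤ deriv X x ∧ deriv X x ≤ 3)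
    (δ : ℝ) (hδ : δ ∈ Set.Ioo (0 : ℝ) 1)
    (A : Fin 3 → Fin 3 → EuclideanSpace ℝ (Fin 3) → ℝ)
    (hA : A = fun i j z =>
      X (‖z‖ / δ) * k ‖z‖ *
        ((if i = j then (1 : ℝ) else 0) / ‖z‖ - z i * z j / ‖z‖ ^ 3)) :
    (∀ i j : Fin 3, ContDiffOn ℝ 1 (A i j) {z : EuclideanSpace ℝ (Fin 3) | z ≠ 0}) ∧
    (∀ z : EuclideanSpace ℝ (Fin 3), δ / 2 ≤ ‖z‖ → ∀ i : Fin 3,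
      |∑ j : Fin 3, fderiv ℝ (A i j) z (EuclideanSpace.single j 1)| ≤
        8 * k (δ / 2) / δ ^ 2) ∧
    (∀ z : EuclideanSpace ℝ (Fin 3), δ / 2 ≤ ‖z‖ →
      |∑ i : Fin 3,
          fderiv ℝ
            (fun z => ∑ j : Fin 3, fderiv ℝ (A i j) z (EuclideanSpace.single j 1))
            z (EuclideanSpace.single i 1)| ≤ 40 * k (δ / 2) / δ ^ 3) := by
  obtain ⟨hδ0, hδ1⟩ := hδ
  subst hA
  -- derivative of the radial factor
  have hck : ∀ r : ℝ, 0 < r → HasDerivAt (fun s => X (s / δ) * k s)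
      (deriv X (r / δ) * (1 / δ) * k r + X (r / δ) * deriv k r) r := by
    intro r hr
    have hkd : HasDerivAt k (deriv k r) r :=
      ((hk.differentiableOn one_ne_zero).differentiableAt (Ioi_mem_nhds hr)).hasDerivAt
    have h1 : HasDerivAt (fun s : ℝ => s / δ) (1 / δ) r := by
      simpa using (hasDerivAt_id r).div_const δ
    have h2 : HasDerivAt X (deriv X (r / δ)) (r / δ) :=
      ((hX.differentiable (by simp)) (r / δ)).hasDerivAt
    exact (h2.comp r h1).mul hkd
  have hK : 0 < k (δ / 2) := hkpos _ (by linarith)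
  refine ⟨?_, ?_, ?_⟩
  · -- C¹ on nonzero vectors
    intro i j z hz
    have hz' : z ≠ 0 := hz
    have hr : (0:ℝ) < ‖z‖ := norm_pos_iff.2 hz'
    apply ContDiffAt.contDiffWithinAt
    have hn : ContDiffAt ℝ 1 (fun y : E => ‖y‖) z := contDiffAt_norm ℝ hz'
    have hXc : ContDiffAt ℝ 1 (fun y : E => X (‖y‖ / δ)) z :=
      (hX.of_le (by simp)).contDiffAt.comp z (hn.div_const δ)
    have hkc : ContDiffAt ℝ 1 (fun y : E => k ‖y‖) z :=
      (hk.contDiffAt (Ioi_mem_nhds hr)).comp z hn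
    have hpi : ContDiffAt ℝ 1 (fun y : E => y i) z :=
      (EuclideanSpace.proj i : E →L[ℝ] ℝ).contDiff.contDiffAt
    have hpj : ContDiffAt ℝ 1 (fun y : E => y j) z :=
      (EuclideanSpace.proj j : E →L[ℝ] ℝ).contDiff.contDiffAt
    exact (hXc.mul hkc).mul
      ((contDiffAt_const.div hn hr.ne').sub
        ((hpi.mul hpj).div (hn.pow 3) (pow_ne_zero 3 hr.ne')))
  · -- first divergence bound
    intro z hzr i
    have hz : z ≠ 0 := by
      intro h; rw [h] at hzr; simp at hzr; linarith
    have hr : (0:ℝ) < ‖z‖ := norm_pos_iff.2 hz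
    have hdiv : ∑ j : Fin 3, fderiv ℝ
        (fun y : E => X (‖y‖ / δ) * k ‖y‖ *
          ((if i = j then (1:ℝ) else 0) / ‖y‖ - y i * y j / ‖y‖ ^ 3)) z
        (EuclideanSpace.single j 1)
        = -2 * (X (‖z‖ / δ) * k ‖z‖) * z i / ‖z‖ ^ 3 :=
      div_formula hz (hck ‖z‖ hr) i
    rw [hdiv]
    have hXz := hXb (‖z‖ / δ)
    have hkz : 0 < k ‖z‖ := hkpos _ hr
    have hXk : 0 ≤ X (‖z‖ / δ) * k ‖z‖ := mul_nonneg hXz.1 hkz.le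
    have hzi : |z i| ≤ ‖z‖ := by
      have h1 := abs_real_inner_le_norm (EuclideanSpace.single i (1:ℝ)) z
      rw [EuclideanSpace.inner_single_left] at h1
      simpa [EuclideanSpace.norm_single] using h1
    have hkr : k ‖z‖ ≤ 2 * k (δ / 2) / δ * ‖z‖ := by
      have h := hkanti (mem_Ioi.2 (by linarith : (0:ℝ) < δ / 2)) (mem_Ioi.2 hr) hzr
      rw [div_le_div_iff₀ hr (by linarith : (0:ℝ) < δ / 2)] at h
      rw [div_mul_eq_mul_div, le_div_iff₀ hδ0]
      nlinarith
    have habs : |(-2 * (X (‖z‖ / δ) * k ‖z‖) * z i / ‖z‖ ^ 3)|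
        = 2 * (X (‖z‖ / δ) * k ‖z‖) * |z i| / ‖z‖ ^ 3 := by
      rw [abs_div, abs_of_pos (by positivity : (0:ℝ) < ‖z‖ ^ 3), abs_mul, abs_mul,
        abs_of_nonneg hXk]
      norm_num
    rw [habs]
    calc 2 * (X (‖z‖ / δ) * k ‖z‖) * |z i| / ‖z‖ ^ 3
        ≤ 2 * k ‖z‖ * ‖z‖ / ‖z‖ ^ 3 := by
          have hXk2 : X (‖z‖ / δ) * k ‖z‖ ≤ k ‖z‖ := mul_le_of_le_one_left hkz.le hXz.2
          gcongr
      _ ≤ 2 * (2 * k (δ / 2) / δ * ‖z‖) * ‖z‖ / ‖z‖ ^ 3 := by gcongr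
      _ = 4 * k (δ / 2) / (δ * ‖z‖) := by field_simp; ring
      _ ≤ 4 * k (δ / 2) / (δ * (δ / 2)) := by gcongr
      _ = 8 * k (δ / 2) / δ ^ 2 := by field_simp; ring
  · -- second divergence bound
    intro z hzr
    have hz : z ≠ 0 := by
      intro h; rw [h] at hzr; simp at hzr; linarith
    have hr : (0:ℝ) < ‖z‖ := norm_pos_iff.2 hz
    have hfd : ∀ i : Fin 3, fderiv ℝ
        (fun y : E => ∑ j : Fin 3, fderiv ℝ
          (fun w : E => X (‖w‖ / δ) * k ‖w‖ *
            ((if i = j then (1:ℝ) else 0) / ‖w‖ - w i * w j / ‖w‖ ^ 3)) y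
          (EuclideanSpace.single j 1)) z
        = fderiv ℝ (fun y : E => -2 * (X (‖y‖ / δ) * k ‖y‖) * y i / ‖y‖ ^ 3) z := by
      intro i
      apply Filter.EventuallyEq.fderiv_eq
      refine Filter.eventuallyEq_of_mem ((isOpen_ne : IsOpen {y : E | y ≠ 0}).mem_nhds hz) ?_
      intro y hy
      have hy' : y ≠ 0 := hy
      exact div_formula hy' (hck ‖y‖ (norm_pos_iff.2 hy')) i
    simp only [hfd]
    have hdiv2 : ∑ i : Fin 3, fderiv ℝ
        (fun y : E => -2 * (X (‖y‖ / δ) * k ‖y‖) * y i / ‖y‖ ^ 3) z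
        (EuclideanSpace.single i 1)
        = -2 * (deriv X (‖z‖ / δ) * (1 / δ) * k ‖z‖ + X (‖z‖ / δ) * deriv k ‖z‖) / ‖z‖ ^ 2 :=
      div2_formula hz (hck ‖z‖ hr)
    rw [hdiv2]
    -- bounds on the pieces
    have hXz := hXb (‖z‖ / δ)
    have hX'z := hXd (‖z‖ / δ)
    have hkz : 0 < k ‖z‖ := hkpos _ hr
    have hkd : HasDerivAt k (deriv k ‖z‖) ‖z‖ :=
      ((hk.differentiableOn one_ne_zero).differentiableAt (Ioi_mem_nhds hr)).hasDerivAt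
    have hk'0 : 0 ≤ deriv k ‖z‖ := deriv_nonneg_of_monoOn hr hkmono hkd
    have hk'le : deriv k ‖z‖ ≤ k ‖z‖ / ‖z‖ := by
      have hq : HasDerivAt (fun s => k s / s)
          ((deriv k ‖z‖ * ‖z‖ - k ‖z‖ * 1) / ‖z‖ ^ 2) ‖z‖ :=
        hkd.div (hasDerivAt_id ‖z‖) hr.ne'
      have h0 := deriv_nonpos_of_antiOn hr hkanti hq
      have hnum : deriv k ‖z‖ * ‖z‖ - k ‖z‖ * 1 ≤ 0 := by
        by_contra h
        push_neg at h
        have : 0 < (deriv k ‖z‖ * ‖z‖ - k ‖z‖ * 1) / ‖z‖ ^ 2 := by positivity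
        linarith
      rw [le_div_iff₀ hr]
      linarith
    have hkr : k ‖z‖ ≤ 2 * k (δ / 2) / δ * ‖z‖ := by
      have h := hkanti (mem_Ioi.2 (by linarith : (0:ℝ) < δ / 2)) (mem_Ioi.2 hr) hzr
      rw [div_le_div_iff₀ hr (by linarith : (0:ℝ) < δ / 2)] at h
      rw [div_mul_eq_mul_div, le_div_iff₀ hδ0]
      nlinarith
    have hkdr : k ‖z‖ / ‖z‖ ≤ 2 * k (δ / 2) / δ := by
      rw [div_le_iff₀ hr]
      exact hkr
    set c' := deriv X (‖z‖ / δ) * (1 / δ) * k ‖z‖ + X (‖z‖ / δ) * deriv k ‖z‖ with hc'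
    have hc'0 : 0 ≤ c' := by
      apply add_nonneg
      · apply mul_nonneg (mul_nonneg hX'z.1 (by positivity)) hkz.le
      · exact mul_nonneg hXz.1 hk'0
    have hc'le : c' ≤ 3 * (1 / δ) * k ‖z‖ + k ‖z‖ / ‖z‖ := by
      have t1 : deriv X (‖z‖ / δ) * (1 / δ) * k ‖z‖ ≤ 3 * (1 / δ) * k ‖z‖ := by
        gcongr
        exact hX'z.2
      have t2 : X (‖z‖ / δ) * deriv k ‖z‖ ≤ k ‖z‖ / ‖z‖ :=
        le_trans (mul_le_of_le_one_left hk'0 hXz.2) hk'le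
      linarith
    have habs : |(-2 * c' / ‖z‖ ^ 2)| = 2 * c' / ‖z‖ ^ 2 := by
      rw [abs_div, abs_of_pos (by positivity : (0:ℝ) < ‖z‖ ^ 2), abs_mul,
        abs_of_nonneg hc'0]
      norm_num
    rw [habs]
    calc 2 * c' / ‖z‖ ^ 2
        ≤ 2 * (3 * (1 / δ) * k ‖z‖ + k ‖z‖ / ‖z‖) / ‖z‖ ^ 2 := by gcongr
      _ ≤ 2 * (3 * (1 / δ) * (2 * k (δ / 2) / δ * ‖z‖) + 2 * k (δ / 2) / δ) / ‖z‖ ^ 2 := by gcongr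
      _ = 12 * k (δ / 2) / (δ ^ 2 * ‖z‖) + 4 * k (δ / 2) / (δ * ‖z‖ ^ 2) := by
          field_simp; ring
      _ ≤ 12 * k (δ / 2) / (δ ^ 2 * (δ / 2)) + 4 * k (δ / 2) / (δ * (δ / 2) ^ 2) := by
          gcongr
      _ = 40 * k (δ / 2) / δ ^ 3 := by field_simp; ring
end
end
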